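/- Let r ≥ 2 and t ≥ 2 with t ≤ 2 + 1/(r−1), and let G = K_{1,t,…,t} be the complete (r+1)-partite graph with one part of size 1 and r parts of size t. Then q₂(G) = tr − t + 1 = δ(G), where δ(G) denotes the minimum degree of G. In particular the only such graphs are K_{1,2,…,2} (for any r ≥ 2) and K_{1,3,3} (with r = 2, t = 3). -/

import Mathlib

open Matrix SimpleGraph
open scoped Classical

/-- The `k`-th largest eigenvalue (1-indexed, counted with multiplicity) of a real
symmetric (Hermitian) matrix; junk value `0` if `M` is not Hermitian or `k` is out of range. -/
noncomputable def kthEig {V : Type*} [Fintype V] [DecidableEq V]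
    (M : Matrix V V ℝ) (k : ℕ) : ℝ :=
  if hM : M.IsHermitian then
    if h : k - 1 < Fintype.card V then
      letI f : Fin (Fintype.card V) → ℝ := hM.eigenvalues ∘ (Fintype.equivFin V).symm
      (f ∘ Tuple.sort f) (Fin.rev ⟨k - 1, h⟩)
    else 0
  else 0

/-- The signless Laplacian `Q(G) = D(G) + A(G)` of a simple graph `G`. -/
noncomputable def signlessLap {V : Type*} [Fintype V] [DecidableEq V]
    (G : SimpleGraph V) [DecidableRel G.Adj] : Matrix V V ℝ :=
  G.degMatrix ℝ + G.adjMatrix ℝ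

/-- `qEig G k` is the `k`-th largest signless Laplacian eigenvalue `q_k(G)`. -/
noncomputable def qEig {V : Type*} [Fintype V] [DecidableEq V]
    (G : SimpleGraph V) [DecidableRel G.Adj] (k : ℕ) : ℝ :=
  kthEig (signlessLap G) k

/-- `c` is a bipartite connected component of `H`: the vertex set of the component splits
into two disjoint classes `U`, `W` such that every edge of the component joins `U` and `W`. -/
def IsBipartiteComponent {V : Type*} (H : SimpleGraph V) (c : H.ConnectedComponent) : Prop :=
  ∃ U W : Set V, U ∪ W = c.supp ∧ Disjoint U W ∧
    ∀ ⦃u v : V⦄, u ∈ c.supp → H.Adj u v → (u ∈ U ∧ v ∈ W) ∨ (u ∈ W ∧ v ∈ U)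

/-- `c` is a balanced bipartite connected component of `H`: bipartite with vertex classes
of equal size. -/
def IsBalancedBipartiteComponent {V : Type*} (H : SimpleGraph V)
    (c : H.ConnectedComponent) : Prop :=
  ∃ U W : Set V, U ∪ W = c.supp ∧ Disjoint U W ∧ U.ncard = W.ncard ∧
    ∀ ⦃u v : V⦄, u ∈ c.supp → H.Adj u v → (u ∈ U ∧ v ∈ W) ∨ (u ∈ W ∧ v ∈ U)

/-- `G` is the complete multipartite graph whose parts are the fibers of `p`:
two vertices are adjacent iff they lie in different parts. -/
def IsCompleteMultipartiteWith {V ι : Type*} (G : SimpleGraph V) (p : V → ι) : Prop :=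
  ∀ u v : V, G.Adj u v ↔ p u ≠ p v

/-! Put `λ = |V| - t = tr - t + 1`, the degree of every vertex outside the singleton part `{v₀}`.
Two vertices `a`, `b` of one part are twins, so `eₐ - e_b` is an eigenvector of `Q` for `λ`; pairs
from two different parts give two independent ones, hence `q₂ ≥ λ`. Conversely
`xᵀQx = λ‖x‖² + (t - 1) x_{v₀}² + (∑ x)² - ∑_P (∑_P x)²`, and on the hyperplane
`(r - 1) ∑ x + x_{v₀} = 0` Cauchy–Schwarz over the `r` big parts bounds the excess by
`(r - 1) (∑ x)² ((t - 2)(r - 1) - 1)`, which is `≤ 0` exactly when `t ≤ 2 + 1/(r - 1)`.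
A codimension-one subspace on which the Rayleigh quotient is at most `λ` leaves room for only one
eigenvalue above `λ`, so `q₂ ≤ λ`. -/

open Finset Module

namespace Matrix.IsHermitian

variable {n : Type*} [Fintype n] [DecidableEq n] {A : Matrix n n ℝ} (hA : A.IsHermitian)
include hA

lemma card_eigenvalues_eq_finrank_eigenspace (μ : ℝ) :
    #{i | hA.eigenvalues i = μ} = finrank ℝ (End.eigenspace (toEuclideanLin A) μ) := by
  rw [← (isSymmetric_toEuclideanLin_iff.mpr hA).card_filter_eigenvalues_eq finrank_euclideanSpace]
  exact card_equiv (Fintype.equivOfCardEq (Fintype.card_fin _)).symm fun _ => by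
    simp only [mem_filter, mem_univ, true_and]
    rfl

lemma card_le_card_eigenvalues_eq_of_linearIndependent {ι : Type*} [Fintype ι] {μ : ℝ}
    {v : ι → n → ℝ} (hv : LinearIndependent ℝ v) (hAv : ∀ i, A *ᵥ v i = μ • v i) :
    Fintype.card ι ≤ #{i | hA.eigenvalues i = μ} := by
  let e := (WithLp.linearEquiv 2 ℝ (n → ℝ)).symm
  have hev : LinearIndependent ℝ (e ∘ v) := hv.map' _ e.ker
  rw [card_eigenvalues_eq_finrank_eigenspace hA, ← finrank_span_eq_card hev]
  refine Submodule.finrank_mono (Submodule.span_le.mpr ?_)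
  rintro _ ⟨i, rfl⟩
  rw [SetLike.mem_coe, End.mem_eigenspace_iff]
  simp [e, hAv]

lemma card_eigenvalues_gt_le_one {μ : ℝ} (c : n → ℝ)
    (hc : ∀ x, c ⬝ᵥ x = 0 → x ⬝ᵥ (A *ᵥ x) ≤ μ * (x ⬝ᵥ x)) :
    #{i | μ < hA.eigenvalues i} ≤ 1 := by
  by_contra! h
  obtain ⟨i, hi, j, hj, hij⟩ := one_lt_card.1 h
  simp only [mem_filter, mem_univ, true_and] at hi hj
  have hdot (k l : n) : (hA.eigenvectorBasis k : n → ℝ) ⬝ᵥ hA.eigenvectorBasis l =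
      if k = l then 1 else 0 := by
    rw [← orthonormal_iff_ite.mp hA.eigenvectorBasis.orthonormal k l,
      EuclideanSpace.inner_eq_star_dotProduct, star_trivial, dotProduct_comm]
  set u : n → ℝ := ⇑(hA.eigenvectorBasis i)
  set v : n → ℝ := ⇑(hA.eigenvectorBasis j)
  obtain ⟨a, b, hab, hcx⟩ : ∃ a b : ℝ, 0 < a ^ 2 + b ^ 2 ∧ c ⬝ᵥ (a • u + b • v) = 0 := by
    by_cases hcu : c ⬝ᵥ u = 0
    · exact ⟨1, 0, by norm_num, by simp [hcu]⟩
    · refine ⟨c ⬝ᵥ v, -(c ⬝ᵥ u), by nlinarith [sq_pos_of_ne_zero hcu, sq_nonneg (c ⬝ᵥ v)], ?_⟩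
      simp only [dotProduct_add, dotProduct_smul, smul_eq_mul]
      ring
  have hquad := hc _ hcx
  simp only [mulVec_add, mulVec_smul, hA.mulVec_eigenvectorBasis, dotProduct_add, add_dotProduct,
    dotProduct_smul, smul_dotProduct, smul_eq_mul, u, v, hdot, if_pos, if_neg hij,
    if_neg (Ne.symm hij)] at hquad
  have hmin := mul_pos (sub_pos.2 (lt_min hi hj)) hab
  nlinarith [mul_le_mul_of_nonneg_right (min_le_left (hA.eigenvalues i) (hA.eigenvalues j))
    (sq_nonneg a), mul_le_mul_of_nonneg_right (min_le_right (hA.eigenvalues i) (hA.eigenvalues j))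
    (sq_nonneg b)]

end Matrix.IsHermitian

lemma Tuple.apply_sort_rev_one_eq {α : Type*} [LinearOrder α] {m : ℕ} {f : Fin m → α} {μ : α}
    (h : 1 < m) (hgt : #{i | μ < f i} ≤ 1) (hge : 2 ≤ #{i | μ ≤ f i}) :
    f (Tuple.sort f (Fin.rev ⟨1, h⟩)) = μ := by
  have hsort (P : α → Prop) [DecidablePred P] : #{i | P (f (Tuple.sort f i))} = #{i | P (f i)} :=
    card_equiv (Tuple.sort f) (by simp)
  set i₀ : Fin m := Fin.rev ⟨1, h⟩
  have hi₀ : (i₀ : ℕ) = m - 2 := by simp only [i₀, Fin.val_rev]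
  rcases lt_trichotomy (f (Tuple.sort f i₀)) μ with hlt | heq | hlt
  · have hsub : ({i | μ ≤ f (Tuple.sort f i)} : Finset (Fin m)) ⊆ Ioi i₀ := fun j hj => by
      simp only [mem_filter, mem_univ, true_and, mem_Ioi] at hj ⊢
      by_contra! hji
      exact (hj.trans (Tuple.monotone_sort f hji)).not_gt hlt
    have := card_le_card hsub
    rw [Fin.card_Ioi, hsort (μ ≤ ·)] at this
    omega
  · exact heq
  · have hsub : Ici i₀ ⊆ ({i | μ < f (Tuple.sort f i)} : Finset (Fin m)) := fun j hj => by
      simp only [mem_filter, mem_univ, true_and, mem_Ici] at hj ⊢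
      exact hlt.trans_le (Tuple.monotone_sort f hj)
    have := card_le_card hsub
    rw [Fin.card_Ici, hsort (μ < ·)] at this
    omega

lemma kthEig_two_eq {n : Type*} [Fintype n] [DecidableEq n] {A : Matrix n n ℝ}
    (hA : A.IsHermitian) {μ : ℝ} (hgt : #{i | μ < hA.eigenvalues i} ≤ 1)
    (hge : 2 ≤ #{i | μ ≤ hA.eigenvalues i}) : kthEig A 2 = μ := by
  have hn : 1 < Fintype.card n := hge.trans (card_le_univ _)
  rw [kthEig, dif_pos hA, dif_pos hn]
  have hequiv (P : ℝ → Prop) [DecidablePred P] :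
      #{i | P ((hA.eigenvalues ∘ (Fintype.equivFin n).symm) i)} = #{i | P (hA.eigenvalues i)} :=
    card_equiv (Fintype.equivFin n).symm (by simp)
  exact Tuple.apply_sort_rev_one_eq hn (by rwa [hequiv (μ < ·)]) (by rwa [hequiv (μ ≤ ·)])

lemma linearIndependent_pair_single_sub_single {n R : Type*} [DecidableEq n] [Ring R]
    [Nontrivial R] {a b c d : n} (hab : a ≠ b) (hcd : c ≠ d) (hac : a ≠ c) (had : a ≠ d)
    (hbc : b ≠ c) :
    LinearIndependent R
      ![(Pi.single a 1 - Pi.single b 1 : n → R), Pi.single c 1 - Pi.single d 1] := by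
  refine LinearIndependent.pair_iff.mpr fun α β h => ⟨?_, ?_⟩
  · simpa [hab, hac, had] using congrFun h a
  · simpa [hcd, hac.symm, hbc.symm] using congrFun h c

namespace SimpleGraph

variable {V : Type*} [Fintype V] [DecidableEq V] (G : SimpleGraph V) [DecidableRel G.Adj]

lemma isHermitian_signlessLap : (signlessLap G).IsHermitian := by
  rw [IsHermitian, conjTranspose_eq_transpose_of_trivial, signlessLap, transpose_add,
    (isSymm_degMatrix (R := ℝ) G).eq, (isSymm_adjMatrix (α := ℝ) G).eq]

lemma dotProduct_signlessLap_mulVec (x : V → ℝ) :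
    x ⬝ᵥ (signlessLap G *ᵥ x) = ∑ v, G.degree v * x v ^ 2 + x ⬝ᵥ (G.adjMatrix ℝ *ᵥ x) := by
  rw [signlessLap, add_mulVec, dotProduct_add, degMatrix]
  congr 1
  exact sum_congr rfl fun v _ => by rw [mulVec_diagonal]; ring

variable {G} in
lemma signlessLap_mulVec_single_sub_single {a b : V} (h : ∀ w, G.Adj a w ↔ G.Adj b w) :
    signlessLap G *ᵥ (Pi.single a 1 - Pi.single b 1) =
      (G.degree a : ℝ) • (Pi.single a 1 - Pi.single b 1) := by
  have hdeg : G.degree a = G.degree b := by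
    simp only [← card_neighborFinset_eq_degree]
    congr 1
    ext w
    simp [h]
  ext w
  have hw : G.Adj w a ↔ G.Adj w b := by rw [adj_comm, h, adj_comm]
  by_cases hwa : w = a <;> by_cases hwb : w = b <;>
    simp [mulVec_sub, signlessLap, degMatrix, adjMatrix_apply, hwa, hwb, hw, hdeg] <;>
    subst_vars <;> simp_all

namespace IsCompleteMultipartiteWith

variable {G} {ι : Type*} [DecidableEq ι] {p : V → ι} (hG : IsCompleteMultipartiteWith G p)
include hG

lemma neighborFinset_eq (v : V) : G.neighborFinset v = ({w | p w = p v} : Finset V)ᶜ := by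
  ext w
  simp [hG v w, eq_comm]

lemma degree_eq (v : V) : G.degree v = Fintype.card V - #{w | p w = p v} := by
  rw [← card_neighborFinset_eq_degree, hG.neighborFinset_eq, card_compl]

lemma dotProduct_adjMatrix_mulVec [Fintype ι] (x : V → ℝ) :
    x ⬝ᵥ (G.adjMatrix ℝ *ᵥ x) = (∑ v, x v) ^ 2 - ∑ i, (∑ v with p v = i, x v) ^ 2 := by
  have hrow (v : V) : (G.adjMatrix ℝ *ᵥ x) v = ∑ w, x w - ∑ w with p w = p v, x w := by
    rw [adjMatrix_mulVec_apply, hG.neighborFinset_eq, eq_sub_iff_add_eq, sum_compl_add_sum]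
  have hfiber (i : ι) : ∑ v with p v = i, x v * ∑ w with p w = p v, x w =
      (∑ v with p v = i, x v) ^ 2 := by
    rw [sq, sum_mul]
    exact sum_congr rfl fun v hv => by rw [(mem_filter.mp hv).2]
  simp only [dotProduct, hrow, mul_sub, sum_sub_distrib, ← sum_mul, ← sq, ← hfiber,
    sum_fiberwise]

end IsCompleteMultipartiteWith

end SimpleGraph

lemma sq_add_sum_le_sq_add_sum_sq_of_constraint {ι : Type*} {T : Finset ι} (hT : T.Nonempty)
    (s : ι → ℝ) {x₀ t : ℝ} (htr : (t - 2) * (#T - 1) ≤ 1)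
    (hx : (#T - 1) * (x₀ + ∑ i ∈ T, s i) + x₀ = 0) :
    (t - 1) * x₀ ^ 2 + (x₀ + ∑ i ∈ T, s i) ^ 2 ≤ x₀ ^ 2 + ∑ i ∈ T, s i ^ 2 := by
  set r : ℝ := (#T : ℝ)
  set S := x₀ + ∑ i ∈ T, s i
  have hr : 1 ≤ r := Nat.one_le_cast.mpr hT.card_pos
  have hx₀ : x₀ ^ 2 = (r - 1) ^ 2 * S ^ 2 := by rw [show x₀ = -(r - 1) * S by linarith]; ring
  have hcs : r * S ^ 2 ≤ ∑ i ∈ T, s i ^ 2 := by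
    have h := sq_sum_le_card_mul_sum_sq (s := T) (f := s)
    rw [show ∑ i ∈ T, s i = r * S by linarith] at h
    nlinarith
  rw [← sub_nonpos]
  calc (t - 1) * x₀ ^ 2 + S ^ 2 - (x₀ ^ 2 + ∑ i ∈ T, s i ^ 2)
      ≤ (t - 2) * (r - 1) ^ 2 * S ^ 2 + S ^ 2 - r * S ^ 2 := by rw [hx₀]; linarith
    _ = (r - 1) * S ^ 2 * ((t - 2) * (r - 1) - 1) := by ring
    _ ≤ 0 := mul_nonpos_of_nonneg_of_nonpos (by nlinarith [sq_nonneg S]) (by linarith)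

namespace SimpleGraph.IsCompleteMultipartiteWith

/-! In what follows `p⁻¹ 0 = {v₀}` and every other part has `t` vertices, so `G ≅ K_{1,t,…,t}`. -/

variable {V : Type*} [Fintype V] [DecidableEq V] {G : SimpleGraph V} [DecidableRel G.Adj]
  {r t : ℕ} {p : V → Fin (r + 1)} {v₀ : V}

lemma filter_eq_zero_eq_singleton (hv₀ : ∀ v, p v = 0 ↔ v = v₀) :
    ({v | p v = 0} : Finset V) = {v₀} := by
  ext
  simp [hv₀]

lemma card_fiber_eq (hv₀ : ∀ v, p v = 0 ↔ v = v₀) (ht : ∀ i ≠ 0, #{v | p v = i} = t) (v : V) :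
    #{w | p w = p v} = if v = v₀ then 1 else t := by
  split_ifs with hv
  · rw [hv, (hv₀ v₀).mpr rfl, filter_eq_zero_eq_singleton hv₀, card_singleton]
  · exact ht _ (by rwa [Ne, hv₀])

variable (hG : IsCompleteMultipartiteWith G p) (hv₀ : ∀ v, p v = 0 ↔ v = v₀)
  (ht : ∀ i ≠ 0, #{v | p v = i} = t)
include hG hv₀ ht

lemma degree_eq_ite (v : V) : G.degree v = Fintype.card V - if v = v₀ then 1 else t := by
  rw [hG.degree_eq, card_fiber_eq hv₀ ht]

lemma cast_degree_eq (v : V) :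
    (G.degree v : ℝ) = (Fintype.card V - t) + if v = v₀ then (t : ℝ) - 1 else 0 := by
  rw [hG.degree_eq, Nat.cast_sub (card_le_univ _), card_fiber_eq hv₀ ht]
  split_ifs <;> push_cast <;> ring

lemma minDegree_eq (hr : 0 < r) (ht₀ : 0 < t) : G.minDegree = Fintype.card V - t := by
  have h₁ : (⟨1, by omega⟩ : Fin (r + 1)) ≠ 0 := Fin.ne_of_val_ne one_ne_zero
  obtain ⟨w, hw⟩ : ({v | p v = ⟨1, by omega⟩} : Finset V).Nonempty := by
    rw [← card_pos, ht _ h₁]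
    exact ht₀
  have hw₀ : w ≠ v₀ := fun h => h₁ (by rw [← (mem_filter.mp hw).2, h, (hv₀ v₀).mpr rfl])
  have : Nonempty V := ⟨w⟩
  refine le_antisymm ?_ (G.le_minDegree_of_forall_le_degree _ fun v => ?_)
  · exact (G.minDegree_le_degree w).trans_eq (by rw [degree_eq_ite hG hv₀ ht, if_neg hw₀])
  · rw [degree_eq_ite hG hv₀ ht]
    split_ifs <;> omega

lemma dotProduct_signlessLap_mulVec_eq (x : V → ℝ) :
    x ⬝ᵥ (signlessLap G *ᵥ x) = (Fintype.card V - t) * (x ⬝ᵥ x) +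
      ((t - 1) * x v₀ ^ 2 + (∑ v, x v) ^ 2 - ∑ i, (∑ v with p v = i, x v) ^ 2) := by
  rw [dotProduct_signlessLap_mulVec, hG.dotProduct_adjMatrix_mulVec]
  simp only [cast_degree_eq hG hv₀ ht, add_mul, sum_add_distrib, ite_mul, zero_mul, sum_ite_eq',
    mem_univ, if_true, dotProduct, ← mul_sum, sq]
  ring

lemma dotProduct_signlessLap_mulVec_le (hr : 0 < r) (htr : ((t : ℝ) - 2) * (r - 1) ≤ 1)
    (x : V → ℝ) (hx : (((r : ℝ) - 1) • 1 + Pi.single v₀ 1) ⬝ᵥ x = 0) :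
    x ⬝ᵥ (signlessLap G *ᵥ x) ≤ (Fintype.card V - t) * (x ⬝ᵥ x) := by
  set s : Fin (r + 1) → ℝ := fun i => ∑ v with p v = i, x v
  have hs₀ : s 0 = x v₀ := by simp only [s, filter_eq_zero_eq_singleton hv₀, sum_singleton]
  have hsum : ∑ v, x v = x v₀ + ∑ i ∈ univ.erase 0, s i := by
    rw [← sum_fiberwise univ p x]
    exact (add_sum_erase univ s (mem_univ 0)).symm.trans (by rw [hs₀])
  have hsq : ∑ i, s i ^ 2 = x v₀ ^ 2 + ∑ i ∈ univ.erase 0, s i ^ 2 := by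
    rw [← add_sum_erase _ _ (mem_univ 0), hs₀]
  have hcard : (#(univ.erase (0 : Fin (r + 1))) : ℝ) = r := by simp
  rw [add_dotProduct, smul_dotProduct, one_dotProduct, single_one_dotProduct, hsum,
    smul_eq_mul] at hx
  rw [dotProduct_signlessLap_mulVec_eq hG hv₀ ht, add_le_iff_nonpos_right, hsq, hsum]
  exact sub_nonpos.mpr <| sq_add_sum_le_sq_add_sum_sq_of_constraint
    ⟨⟨1, by omega⟩, by simp [Fin.ext_iff]⟩ s (by rwa [hcard]) (by rwa [hcard])

lemma two_le_card_eigenvalues_eq (hr : 2 ≤ r) (ht₂ : 2 ≤ t) :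
    2 ≤ #{i | (isHermitian_signlessLap G).eigenvalues i = Fintype.card V - t} := by
  have hpair (i : Fin (r + 1)) (hi : i ≠ 0) : ∃ a b, a ≠ b ∧ p a = i ∧ p b = i := by
    obtain ⟨a, ha, b, hb, hab⟩ := one_lt_card.1 (by rw [ht i hi]; omega : 1 < #{v | p v = i})
    exact ⟨a, b, hab, (mem_filter.1 ha).2, (mem_filter.1 hb).2⟩
  obtain ⟨a, b, hab, hpa, hpb⟩ := hpair ⟨1, by omega⟩ (Fin.ne_of_val_ne one_ne_zero)
  obtain ⟨c, d, hcd, hpc, hpd⟩ := hpair ⟨2, by omega⟩ (Fin.ne_of_val_ne two_ne_zero)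
  have heig {a b : V} (hpa : p a ≠ 0) (hab : p a = p b) :
      signlessLap G *ᵥ (Pi.single a 1 - Pi.single b 1) =
        ((Fintype.card V : ℝ) - t) • (Pi.single a 1 - Pi.single b 1) := by
    rw [signlessLap_mulVec_single_sub_single (fun w => by rw [hG, hG, hab]),
      cast_degree_eq hG hv₀ ht, if_neg fun h => hpa ((hv₀ a).mpr h), add_zero]
  have hne {u w : V} (h : p u ≠ p w) : u ≠ w := fun huw => h (congrArg p huw)
  have h12 : (⟨1, by omega⟩ : Fin (r + 1)) ≠ ⟨2, by omega⟩ := Fin.ne_of_val_ne (by norm_num)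
  have hli := linearIndependent_pair_single_sub_single (R := ℝ) hab hcd
    (hne (by rw [hpa, hpc]; exact h12)) (hne (by rw [hpa, hpd]; exact h12))
    (hne (by rw [hpb, hpc]; exact h12))
  simpa using (isHermitian_signlessLap G).card_le_card_eigenvalues_eq_of_linearIndependent hli
    (Fin.forall_fin_two.2 ⟨heig (by simp [hpa, Fin.ext_iff]) (hpa.trans hpb.symm),
      heig (by simp [hpc, Fin.ext_iff]) (hpc.trans hpd.symm)⟩)

end SimpleGraph.IsCompleteMultipartiteWith

lemma eq_two_or_of_sub_two_mul_sub_one_le_one {r t : ℕ} (hr : 2 ≤ r) (ht : 2 ≤ t)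
    (h : ((t : ℝ) - 2) * (r - 1) ≤ 1) : t = 2 ∨ (r = 2 ∧ t = 3) := by
  have hrR : (2 : ℝ) ≤ r := by exact_mod_cast hr
  have htR : (2 : ℝ) ≤ t := by exact_mod_cast ht
  have ht₃ : t ≤ 3 := by exact_mod_cast (by nlinarith : (t : ℝ) ≤ 3)
  interval_cases t
  · exact Or.inl rfl
  · norm_num at h
    exact Or.inr ⟨by omega, rfl⟩

/-- Let `r, t ≥ 2` with `t ≤ 2 + 1/(r-1)` and let `G = K_{1,t,…,t}` be the complete
`(r+1)`-partite graph with one part of size `1` and `r` parts of size `t`. Then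
`q₂(G) = tr - t + 1 = δ(G)`; in particular the only such graphs are `K_{1,2,…,2}`
(for any `r ≥ 2`) and `K_{1,3,3}` (with `r = 2`, `t = 3`). -/
theorem q2_of_K1tt_small_t (r t : ℕ) (hr : 2 ≤ r) (ht : 2 ≤ t)
    (htr : (t : ℝ) ≤ 2 + 1 / ((r : ℝ) - 1))
    (G : SimpleGraph (Fin (r * t + 1))) [DecidableRel G.Adj]
    (p : Fin (r * t + 1) → Fin (r + 1))
    (hp : IsCompleteMultipartiteWith G p)
    (h0 : {v | p v = 0}.ncard = 1)
    (hi : ∀ i : Fin (r + 1), i ≠ 0 → {v | p v = i}.ncard = t) :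
    qEig G 2 = (t : ℝ) * r - t + 1 ∧
    (G.minDegree : ℝ) = (t : ℝ) * r - t + 1 ∧
    (t = 2 ∨ (r = 2 ∧ t = 3)) := by
  have hr₁ : (0 : ℝ) < r - 1 := by linarith [(Nat.ofNat_le_cast.mpr hr : (2 : ℝ) ≤ r)]
  have htr' : ((t : ℝ) - 2) * (r - 1) ≤ 1 := by rw [← le_div_iff₀ hr₁]; linarith
  obtain ⟨v₀, hv₀⟩ := Set.ncard_eq_one.mp h0
  have hp₀ (v) : p v = 0 ↔ v = v₀ := Set.ext_iff.mp hv₀ v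
  have hpt (i) (hi0 : i ≠ 0) : #{v | p v = i} = t := by
    simpa [Set.ncard_eq_toFinset_card'] using hi i hi0
  have hcardV : (Fintype.card (Fin (r * t + 1)) : ℝ) - t = t * r - t + 1 := by
    rw [Fintype.card_fin]
    push_cast
    ring
  have hQ := isHermitian_signlessLap G
  refine ⟨?_, ?_, eq_two_or_of_sub_two_mul_sub_one_le_one hr ht htr'⟩
  · rw [qEig, ← hcardV]
    refine kthEig_two_eq hQ (hQ.card_eigenvalues_gt_le_one _
      (hp.dotProduct_signlessLap_mulVec_le hp₀ hpt (by omega) htr')) ?_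
    exact (hp.two_le_card_eigenvalues_eq hp₀ hpt hr ht).trans
      (card_le_card fun _ => by simp only [mem_filter, mem_univ, true_and]; exact ge_of_eq)
  · rw [hp.minDegree_eq hp₀ hpt (by omega) (by omega), Nat.cast_sub, hcardV]
    rw [Fintype.card_fin]
    exact Nat.le_succ_of_le (Nat.le_mul_of_pos_left t (by omega))
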